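/- arXiv:2104.07487 — 3 statements merged into one kernel-verified Lean document; each statement's English description precedes it below -/
import Mathlib

section
/- Let K ⊆ B be a nonempty compact convex subset of the closed unit ball B in ℝ^d, and let ρ be the Hausdorff distance between K and B. Then K contains the closed ball of radius 1 − ρ centered at the origin. -/
open MeasureTheory Real Set
open scoped RealInnerProductSpace

noncomputable section

/-- The normalized uniform (surface) measure on the unit sphere in `ℝ^d`. -/
def sphereMeasure (d : ℕ) : Measure (Metric.sphere (0 : EuclideanSpace ℝ (Fin d)) 1) :=
  ((volume : Measure (EuclideanSpace ℝ (Fin d))).toSphere Set.univ)⁻¹ •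
    (volume : Measure (EuclideanSpace ℝ (Fin d))).toSphere

/-- The support function of a set `K ⊆ ℝ^d`. -/
def suppFn {d : ℕ} (K : Set (EuclideanSpace ℝ (Fin d))) (y : EuclideanSpace ℝ (Fin d)) : ℝ :=
  sSup ((fun x => ⟪x, y⟫) '' K)

/-- The `L_p` analog of the Hausdorff distance: the `L_p`-distance of support functions
with respect to the normalized uniform measure on the sphere. -/
def Dp {d : ℕ} (p : ℝ) (K K' : Set (EuclideanSpace ℝ (Fin d))) : ℝ :=
  (∫ y : Metric.sphere (0 : EuclideanSpace ℝ (Fin d)) 1,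
      |suppFn K (y : EuclideanSpace ℝ (Fin d)) - suppFn K' (y : EuclideanSpace ℝ (Fin d))| ^ p
    ∂ sphereMeasure d) ^ (1 / p)

/-- The open spherical cap of angular radius `θ` around `v`, as a subset of `ℝ^d`. -/
def cap {d : ℕ} (v : EuclideanSpace ℝ (Fin d)) (θ : ℝ) : Set (EuclideanSpace ℝ (Fin d)) :=
  {x | ‖x‖ = 1 ∧ Real.arccos ⟪x, v⟫ < θ}

/-- The open spherical cap, as a subset of the unit sphere (for measuring). -/
def capS {d : ℕ} (v : EuclideanSpace ℝ (Fin d)) (θ : ℝ) :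
    Set (Metric.sphere (0 : EuclideanSpace ℝ (Fin d)) 1) :=
  {x | Real.arccos ⟪(x : EuclideanSpace ℝ (Fin d)), v⟫ < θ}

/-- The Steiner point of a set `K ⊆ ℝ^d`. -/
def steiner {d : ℕ} (K : Set (EuclideanSpace ℝ (Fin d))) : EuclideanSpace ℝ (Fin d) :=
  (d : ℝ) • ∫ y : Metric.sphere (0 : EuclideanSpace ℝ (Fin d)) 1,
      suppFn K (y : EuclideanSpace ℝ (Fin d)) • (y : EuclideanSpace ℝ (Fin d)) ∂ sphereMeasure d

/-- If `K ⊆ B` is a nonempty compact convex subset of the closed unit ball `B` in `ℝ^d`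
and `ρ` is the Hausdorff distance between `K` and `B`, then `K` contains the closed ball
of radius `1 - ρ` centered at the origin. -/
theorem contains_ball_of_hausdorff_close {d : ℕ} (K : Set (EuclideanSpace ℝ (Fin d)))
    (hne : K.Nonempty) (hcpt : IsCompact K) (hconv : Convex ℝ K)
    (hsub : K ⊆ Metric.closedBall 0 1) :
    Metric.closedBall (0 : EuclideanSpace ℝ (Fin d))
        (1 - Metric.hausdorffDist K (Metric.closedBall 0 1)) ⊆ K := by
  set ρ := Metric.hausdorffDist K (Metric.closedBall 0 1) with hρ
  intro x hx
  by_contra hxK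
  simp only [Metric.mem_closedBall, dist_zero_right] at hx
  -- separate x from K
  obtain ⟨f, c, hfK, hfx⟩ := geometric_hahn_banach_closed_point hconv hcpt.isClosed hxK
  set v := (InnerProductSpace.toDual ℝ (EuclideanSpace ℝ (Fin d))).symm f with hv
  have hfv : ∀ z, f z = ⟪v, z⟫ := by
    intro z
    simp [hv, InnerProductSpace.toDual_symm_apply]
  obtain ⟨y0, hy0⟩ := hne
  have hvne : v ≠ 0 := by
    intro h
    have := hfK y0 hy0
    have := hfx
    rw [hfv, h] at this
    rw [hfv, h] at *
    simp [inner_zero_left] at *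
    linarith
  set u := ‖v‖⁻¹ • v with hu
  have hvpos : (0:ℝ) < ‖v‖ := norm_pos_iff.mpr hvne
  have hun : ‖u‖ = 1 := by
    rw [hu, norm_smul, norm_inv, norm_norm, inv_mul_cancel₀ (ne_of_gt hvpos)]
  have huB : u ∈ Metric.closedBall (0 : EuclideanSpace ℝ (Fin d)) 1 := by
    simp [Metric.mem_closedBall, dist_zero_right, hun]
  -- key bound: for y ∈ K, ⟪u, y⟫ ≤ c/‖v‖ and c/‖v‖ < ⟪u, x⟫ ≤ ‖x‖ ≤ 1 - ρ
  have hux : ⟪u, x⟫ ≤ ‖x‖ := by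
    calc ⟪u, x⟫ ≤ ‖u‖ * ‖x‖ := real_inner_le_norm u x
    _ = ‖x‖ := by rw [hun, one_mul]
  have hcux : c / ‖v‖ < ⟪u, x⟫ := by
    have : c < ⟪v, x⟫ := by rw [← hfv]; exact hfx
    rw [hu, real_inner_smul_left]
    rw [div_lt_iff₀ hvpos]
    calc c < ⟪v, x⟫ := this
    _ = ‖v‖⁻¹ * ⟪v, x⟫ * ‖v‖ := by field_simp
  have hdistbound : ∀ y ∈ K, 1 - c / ‖v‖ ≤ dist u y := by
    intro y hy
    have h1 : ⟪u, y⟫ ≤ c / ‖v‖ := by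
      have : ⟪v, y⟫ < c := by rw [← hfv]; exact hfK y hy
      rw [hu, real_inner_smul_left, le_div_iff₀ hvpos]
      have heq : ‖v‖⁻¹ * ⟪v, y⟫ * ‖v‖ = ⟪v, y⟫ := by field_simp
      rw [heq]; linarith
    have h2 : ⟪u, u - y⟫ ≤ ‖u - y‖ := by
      calc ⟪u, u - y⟫ ≤ ‖u‖ * ‖u - y‖ := real_inner_le_norm _ _
      _ = ‖u - y‖ := by rw [hun, one_mul]
    have h3 : ⟪u, u - y⟫ = 1 - ⟪u, y⟫ := by
      rw [inner_sub_right, real_inner_self_eq_norm_sq, hun]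
      norm_num
    rw [dist_eq_norm]
    linarith
  have hinf : 1 - c / ‖v‖ ≤ Metric.infDist u K := by
    obtain ⟨y, hyK, hdy⟩ := hcpt.exists_infDist_eq_dist ⟨y0, hy0⟩ u
    rw [hdy]
    exact hdistbound y hyK
  -- infDist u K ≤ ρ
  have hfin : EMetric.hausdorffEdist (Metric.closedBall (0 : EuclideanSpace ℝ (Fin d)) 1) K ≠ ⊤ := by
    apply Metric.hausdorffEdist_ne_top_of_nonempty_of_bounded
    · exact ⟨0, by simp⟩
    · exact ⟨y0, hy0⟩
    · exact Metric.isBounded_closedBall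
    · exact hcpt.isBounded
  have hle : Metric.infDist u K ≤ ρ := by
    rw [hρ, Metric.hausdorffDist_comm]
    exact Metric.infDist_le_hausdorffDist_of_mem huB hfin
  have : ρ < ρ := by
    calc ρ ≤ 1 - ‖x‖ := by linarith
    _ ≤ 1 - ⟪u, x⟫ := by linarith
    _ < 1 - c / ‖v‖ := by linarith
    _ ≤ Metric.infDist u K := hinf
    _ ≤ ρ := hle
  exact lt_irrefl _ this
end
end

section
/- Let d ≥ 3 and θ ∈ (0, π/2). The normalized surface measure of the spherical cap C(u,θ) = {x ∈ S^{d−1} : angle(x,u) < θ} satisfies σ(C(θ)) ≤ γ·√d·θ^{d−2}, where γ is an absolute constant independent of d and θ. -/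
open MeasureTheory Real Set
open scoped RealInnerProductSpace

noncomputable section

/-! ### Auxiliary material for `cap_area_bound` -/

open scoped Pointwise

/-- Log-convexity (Bohr–Mollerup) midpoint bound for the Gamma function. -/
lemma my_gamma_half_le {s : ℝ} (hs : 0 < s) :
    Real.Gamma (s + 1/2) ≤ Real.Gamma s * Real.sqrt s := by
  have hs1 : (0:ℝ) < s + 1 := by linarith
  have h := Real.convexOn_log_Gamma.2 (Set.mem_Ioi.2 hs) (Set.mem_Ioi.2 hs1)
    (by norm_num : (0:ℝ) ≤ 1/2) (by norm_num : (0:ℝ) ≤ 1/2) (by norm_num)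
  simp only [Function.comp_apply, smul_eq_mul] at h
  have hmid : (1/2 : ℝ) * s + (1/2 : ℝ) * (s+1) = s + 1/2 := by ring
  rw [hmid] at h
  have hG := Real.Gamma_pos_of_pos hs
  have hG1 := Real.Gamma_pos_of_pos hs1
  have hGh := Real.Gamma_pos_of_pos (by linarith : (0:ℝ) < s + 1/2)
  have hsq : Real.Gamma (s + 1/2) ^ 2 ≤ Real.Gamma s * Real.Gamma (s+1) := by
    have h2 : Real.log (Real.Gamma (s+1/2) ^ 2) ≤ Real.log (Real.Gamma s * Real.Gamma (s+1)) := by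
      rw [Real.log_pow, Real.log_mul hG.ne' hG1.ne']
      push_cast
      linarith
    exact (Real.log_le_log_iff (by positivity) (by positivity)).1 h2
  rw [Real.Gamma_add_one hs.ne'] at hsq
  have h3 : Real.Gamma (s + 1/2) ^ 2 ≤ (Real.Gamma s * Real.sqrt s) ^ 2 := by
    have : (Real.Gamma s * Real.sqrt s) ^ 2 = Real.Gamma s * (s * Real.Gamma s) := by
      rw [mul_pow, Real.sq_sqrt hs.le]; ring
    linarith
  calc Real.Gamma (s + 1/2) = Real.sqrt (Real.Gamma (s + 1/2) ^ 2) := (Real.sqrt_sq hGh.le).symm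
    _ ≤ Real.sqrt ((Real.Gamma s * Real.sqrt s) ^ 2) := Real.sqrt_le_sqrt h3
    _ = Real.Gamma s * Real.sqrt s := Real.sqrt_sq (by positivity)

/-- The open "cylinder" containing the cone over the spherical cap. -/
def myCyl {d : ℕ} (u : EuclideanSpace ℝ (Fin d)) (θ : ℝ) : Set (EuclideanSpace ℝ (Fin d)) :=
  {y | ⟪y, u⟫ ∈ Set.Ioo (0:ℝ) 1 ∧ ‖y - ⟪y, u⟫ • u‖ < θ}

lemma myCyl_isOpen {d : ℕ} (u : EuclideanSpace ℝ (Fin d)) (θ : ℝ) : IsOpen (myCyl u θ) := by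
  have hc : Continuous fun y : EuclideanSpace ℝ (Fin d) => ⟪y, u⟫ :=
    continuous_id.inner continuous_const
  have hc2 : Continuous fun y : EuclideanSpace ℝ (Fin d) => ‖y - ⟪y, u⟫ • u‖ :=
    (continuous_id.sub (hc.smul continuous_const)).norm
  exact (isOpen_Ioo.preimage hc).inter (isOpen_lt hc2 continuous_const)

lemma capS_measurable {d : ℕ} (u : EuclideanSpace ℝ (Fin d)) (θ : ℝ) :
    MeasurableSet (capS u θ) := by
  have hc : Continuous fun x : Metric.sphere (0 : EuclideanSpace ℝ (Fin d)) 1 =>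
      Real.arccos ⟪(x : EuclideanSpace ℝ (Fin d)), u⟫ :=
    Real.continuous_arccos.comp (continuous_subtype_val.inner continuous_const)
  exact (isOpen_lt hc continuous_const).measurableSet

lemma smul_cap_subset {d : ℕ} {u : EuclideanSpace ℝ (Fin d)} (hu : ‖u‖ = 1) {θ : ℝ}
    (hθ : θ ∈ Set.Ioo 0 (π/2)) :
    Set.Ioo (0:ℝ) 1 • ((↑) '' capS u θ) ⊆ myCyl u θ := by
  rintro y hy
  rw [Set.mem_smul] at hy
  obtain ⟨r, hr, z, hz, rfl⟩ := hy
  obtain ⟨x, hxcap, rfl⟩ := hz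
  have hx1 : ‖(x : EuclideanSpace ℝ (Fin d))‖ = 1 := by
    exact mem_sphere_zero_iff_norm.mp x.2
  set c : ℝ := ⟪(x : EuclideanSpace ℝ (Fin d)), u⟫ with hc
  have hcle : c ≤ 1 := by
    have := real_inner_le_norm (x : EuclideanSpace ℝ (Fin d)) u
    rwa [hx1, hu, one_mul] at this
  have hcge : -1 ≤ c := by
    have := abs_real_inner_le_norm (x : EuclideanSpace ℝ (Fin d)) u
    rw [hx1, hu, one_mul] at this
    linarith [abs_le.mp this]
  have hacos : Real.arccos c < θ := hxcap
  have hcoslt : Real.cos θ < c := by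
    have := Real.cos_lt_cos_of_nonneg_of_le_pi (Real.arccos_nonneg c)
      (by linarith [Real.pi_pos, hθ.2] : θ ≤ π) hacos
    rwa [Real.cos_arccos hcge hcle] at this
  have hcospos : 0 < Real.cos θ := Real.cos_pos_of_mem_Ioo ⟨by linarith [hθ.1, Real.pi_pos], hθ.2⟩
  have hcpos : 0 < c := hcospos.trans hcoslt
  constructor
  · rw [real_inner_smul_left, ← hc]
    constructor
    · exact mul_pos hr.1 hcpos
    · calc r * c ≤ r * 1 := by nlinarith [hr.1]
        _ < 1 := by linarith [hr.2]
  · rw [real_inner_smul_left, ← hc]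
    have hsub : r • (x : EuclideanSpace ℝ (Fin d)) - (r * c) • u
        = r • ((x : EuclideanSpace ℝ (Fin d)) - c • u) := by
      rw [smul_sub, mul_smul]
    rw [hsub, norm_smul]
    have hnormsq : ‖(x : EuclideanSpace ℝ (Fin d)) - c • u‖ ^ 2 = 1 - c ^ 2 := by
      rw [norm_sub_sq_real, real_inner_smul_right, norm_smul, hx1, hu, ← hc]
      simp [abs_of_pos hcpos]
      ring
    have hsin : 0 < Real.sin θ := Real.sin_pos_of_pos_of_lt_pi hθ.1
      (by linarith [Real.pi_pos, hθ.2])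
    have hlt : ‖(x : EuclideanSpace ℝ (Fin d)) - c • u‖ < Real.sin θ := by
      have h1 : ‖(x : EuclideanSpace ℝ (Fin d)) - c • u‖ ^ 2 < Real.sin θ ^ 2 := by
        rw [hnormsq, Real.sin_sq]
        nlinarith [hcoslt, hcospos]
      nlinarith [norm_nonneg ((x : EuclideanSpace ℝ (Fin d)) - c • u), hsin]
    have hsinθ : Real.sin θ < θ := Real.sin_lt hθ.1
    calc |r| * ‖(x : EuclideanSpace ℝ (Fin d)) - c • u‖
        ≤ 1 * ‖(x : EuclideanSpace ℝ (Fin d)) - c • u‖ := by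
          apply mul_le_mul_of_nonneg_right _ (norm_nonneg _)
          rw [abs_of_pos hr.1]; linarith [hr.2]
      _ < θ := by rw [one_mul]; linarith

lemma vol_myCyl_single (n : ℕ) (θ : ℝ) :
    volume (myCyl (EuclideanSpace.single (0 : Fin (n+1)) (1:ℝ)) θ)
      = volume (Metric.ball (0 : EuclideanSpace ℝ (Fin n)) θ) := by
  set B : Set (Fin n → ℝ) :=
    ((MeasurableEquiv.toLp 2 (Fin n → ℝ)).symm).symm ⁻¹' (Metric.ball 0 θ) with hB
  have hBmeas : MeasurableSet B :=
    ((MeasurableEquiv.toLp 2 (Fin n → ℝ)).symm).symm.measurableSet_preimage.mpr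
      measurableSet_ball
  have hinner : ∀ y : EuclideanSpace ℝ (Fin (n+1)),
      ⟪y, EuclideanSpace.single (0 : Fin (n+1)) (1:ℝ)⟫ = y 0 := by
    intro y
    rw [EuclideanSpace.inner_single_right]
    simp
  have hset : myCyl (EuclideanSpace.single (0 : Fin (n+1)) (1:ℝ)) θ =
      ((MeasurableEquiv.piFinSuccAbove (fun _ : Fin (n+1) => ℝ) 0) ∘
        ((MeasurableEquiv.toLp 2 (Fin (n+1) → ℝ)).symm)) ⁻¹' ((Set.Ioo (0:ℝ) 1) ×ˢ B) := by
    ext y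
    simp only [myCyl, Set.mem_setOf_eq, Set.mem_preimage, Function.comp_apply,
      Set.mem_prod, hinner y]
    have happly : (MeasurableEquiv.piFinSuccAbove (fun _ : Fin (n+1) => ℝ) 0)
        (((MeasurableEquiv.toLp 2 (Fin (n+1) → ℝ)).symm) y)
        = (y 0, fun j : Fin n => y ((0 : Fin (n+1)).succAbove j)) := rfl
    rw [happly]
    have hnorm : ‖y - (y 0) • EuclideanSpace.single (0 : Fin (n+1)) (1:ℝ)‖
        = ‖((MeasurableEquiv.toLp 2 (Fin n → ℝ)).symm).symm
            (fun j : Fin n => y ((0 : Fin (n+1)).succAbove j))‖ := by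
      rw [EuclideanSpace.norm_eq, EuclideanSpace.norm_eq]
      congr 1
      rw [Fin.sum_univ_succ]
      have hterm0 : (y - (y 0) • EuclideanSpace.single (0 : Fin (n+1)) (1:ℝ)) 0
          = 0 := by
        simp [EuclideanSpace.single_apply]
      rw [hterm0]
      simp only [norm_zero, ne_eq, OfNat.ofNat_ne_zero, not_false_eq_true, zero_pow, zero_add]
      apply Finset.sum_congr rfl
      intro j _
      have : (y - (y 0) • EuclideanSpace.single (0 : Fin (n+1)) (1:ℝ)) j.succ
          = y j.succ := by
        simp [EuclideanSpace.single_apply, Fin.succ_ne_zero]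
      rw [this]
      rfl
    rw [hnorm]
    simp only [hB, Set.mem_preimage, Metric.mem_ball, dist_zero_right]
  rw [hset]
  have hMP : MeasurePreserving
      ((MeasurableEquiv.piFinSuccAbove (fun _ : Fin (n+1) => ℝ) 0) ∘
        ((MeasurableEquiv.toLp 2 (Fin (n+1) → ℝ)).symm)) volume volume :=
    (volume_preserving_piFinSuccAbove (fun _ : Fin (n+1) => ℝ) 0).comp
      (EuclideanSpace.volume_preserving_symm_measurableEquiv_toLp (Fin (n+1)))
  rw [hMP.measure_preimage ((measurableSet_Ioo.prod hBmeas)).nullMeasurableSet]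
  rw [Measure.volume_eq_prod, Measure.prod_prod, Real.volume_Ioo]
  rw [((EuclideanSpace.volume_preserving_symm_measurableEquiv_toLp (Fin n)).symm
    ((MeasurableEquiv.toLp 2 (Fin n → ℝ)).symm)).measure_preimage
    measurableSet_ball.nullMeasurableSet]
  simp

lemma vol_myCyl_eq {d : ℕ} {u v : EuclideanSpace ℝ (Fin d)} (huv : ‖u‖ = ‖v‖) (θ : ℝ) :
    volume (myCyl u θ) = volume (myCyl v θ) := by
  set f := Submodule.reflection (ℝ ∙ (u - v))ᗮ with hf
  have hfu : f u = v := Submodule.reflection_sub huv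
  have hpre : myCyl u θ = f ⁻¹' (myCyl v θ) := by
    ext y
    simp only [myCyl, Set.mem_preimage, Set.mem_setOf_eq, ← hfu]
    have h1 : ⟪f y, f u⟫ = ⟪y, u⟫ := LinearIsometryEquiv.inner_map_map f y u
    rw [h1]
    constructor
    · rintro ⟨h2, h3⟩
      refine ⟨h2, ?_⟩
      rwa [← LinearIsometryEquiv.map_smul, ← LinearIsometryEquiv.map_sub,
        LinearIsometryEquiv.norm_map]
    · rintro ⟨h2, h3⟩
      refine ⟨h2, ?_⟩
      rwa [← LinearIsometryEquiv.map_smul, ← LinearIsometryEquiv.map_sub,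
        LinearIsometryEquiv.norm_map] at h3
  rw [hpre, (f.measurePreserving).measure_preimage
    (myCyl_isOpen v θ).measurableSet.nullMeasurableSet]

/-- The purely real-arithmetic final estimate. -/
lemma my_final_arith (n : ℕ) (hn : 2 ≤ n) {θ : ℝ} (hθ : 0 < θ) (hθ2 : θ < π/2) :
    (θ ^ n * (Real.sqrt π ^ n / Real.Gamma ((n : ℝ)/2 + 1))) /
      (Real.sqrt π ^ (n+1) / Real.Gamma (((n:ℝ)+1)/2 + 1))
      ≤ π/2 * Real.sqrt ((n : ℝ) + 1) * θ ^ (n + 1 - 2) := by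
  have hπ := Real.pi_gt_three
  set P := Real.sqrt π with hP
  have hPpos : 0 < P := Real.sqrt_pos.2 (by linarith)
  set s : ℝ := (n : ℝ)/2 + 1 with hs
  have hspos : 0 < s := by rw [hs]; positivity
  have hsval : s ≤ ((n:ℝ)+1) * π := by
    have hn0 : (0:ℝ) ≤ (n:ℝ) := Nat.cast_nonneg n
    rw [hs]; nlinarith
  clear_value s
  set G1 := Real.Gamma s with hG1
  have hG1pos : 0 < G1 := Real.Gamma_pos_of_pos hspos
  have hG2eq : ((n:ℝ)+1)/2 + 1 = s + 1/2 := by rw [hs]; ring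
  rw [hG2eq]
  set G2 := Real.Gamma (s + 1/2) with hG2
  have hG2pos : 0 < G2 := by rw [hG2]; exact Real.Gamma_pos_of_pos (by linarith)
  have hsqrt : Real.sqrt s ≤ Real.sqrt ((n:ℝ)+1) * P := by
    rw [hP, ← Real.sqrt_mul (by positivity : (0:ℝ) ≤ (n:ℝ)+1)]
    apply Real.sqrt_le_sqrt
    linarith
  have hG2le : G2 ≤ G1 * (Real.sqrt ((n:ℝ)+1) * P) := by
    calc G2 ≤ G1 * Real.sqrt s := my_gamma_half_le hspos
      _ ≤ G1 * (Real.sqrt ((n:ℝ)+1) * P) := by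
          exact mul_le_mul_of_nonneg_left hsqrt hG1pos.le
  have hexp : n + 1 - 2 = n - 1 := by omega
  rw [hexp]
  have hpow : θ ^ n = θ ^ (n-1) * θ := by
    rw [← pow_succ]
    congr 1
    omega
  have key : θ ^ n * G2 ≤ (π/2 * Real.sqrt ((n:ℝ)+1) * θ ^ (n-1)) * (P * G1) := by
    rw [hpow]
    have base : θ * G2 ≤ (π/2) * (G1 * (Real.sqrt ((n:ℝ)+1) * P)) := by
      apply mul_le_mul hθ2.le hG2le hG2pos.le (by positivity)
    calc θ ^ (n-1) * θ * G2 = θ ^ (n-1) * (θ * G2) := by ring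
      _ ≤ θ ^ (n-1) * ((π/2) * (G1 * (Real.sqrt ((n:ℝ)+1) * P))) := by
          exact mul_le_mul_of_nonneg_left base (by positivity)
      _ = (π/2 * Real.sqrt ((n:ℝ)+1) * θ ^ (n-1)) * (P * G1) := by ring
  have hrw : (θ ^ n * (P ^ n / G1)) / (P ^ (n+1) / G2)
      = (θ ^ n * G2) * P ^ n / (G1 * P ^ (n+1)) := by
    field_simp
  rw [hrw, div_le_iff₀ (by positivity)]
  calc (θ ^ n * G2) * P ^ n
      ≤ ((π/2 * Real.sqrt ((n:ℝ)+1) * θ ^ (n-1)) * (P * G1)) * P ^ n :=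
        mul_le_mul_of_nonneg_right key (by positivity)
    _ = π/2 * Real.sqrt ((n:ℝ)+1) * θ ^ (n-1) * (G1 * P ^ (n+1)) := by ring

/-- For `d ≥ 3` and `θ ∈ (0, π/2)`, the normalized surface measure of the spherical cap
`C(u,θ)` satisfies `σ(C(θ)) ≤ γ·√d·θ^(d-2)` for an absolute constant `γ` independent of
`d` and `θ`. -/
theorem cap_area_bound :
    ∃ γ : ℝ, 0 < γ ∧ ∀ d : ℕ, 3 ≤ d → ∀ θ ∈ Set.Ioo (0 : ℝ) (π / 2),
      ∀ u : EuclideanSpace ℝ (Fin d), ‖u‖ = 1 →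
        (sphereMeasure d (capS u θ)).toReal ≤ γ * Real.sqrt d * θ ^ (d - 2) := by
  refine ⟨π / 2, by positivity, ?_⟩
  intro d hd θ hθ u hu
  obtain ⟨n, rfl⟩ : ∃ n, d = n + 1 := ⟨d - 1, by omega⟩
  have hn : 2 ≤ n := by omega
  haveI : Nonempty (Fin n) := ⟨⟨0, by omega⟩⟩
  set μ := (volume : Measure (EuclideanSpace ℝ (Fin (n+1)))) with hμ
  set A := μ (Metric.ball (0 : EuclideanSpace ℝ (Fin (n+1))) 1) with hA
  set V := volume (Metric.ball (0 : EuclideanSpace ℝ (Fin n)) θ) with hV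
  have hA0 : A ≠ 0 := (Metric.measure_ball_pos μ 0 one_pos).ne'
  have hAtop : A ≠ ⊤ := measure_ball_lt_top.ne
  have hVtop : V ≠ ⊤ := measure_ball_lt_top.ne
  set c : ENNReal := ((n+1 : ℕ) : ENNReal) with hcdef
  have hc0 : c ≠ 0 := by simp [hcdef]
  have hctop : c ≠ ⊤ := by simp [hcdef]
  have hcap : MeasurableSet (capS u θ) := capS_measurable u θ
  -- the cylinder bound
  have hcylvol : volume (myCyl u θ) = V := by
    rw [vol_myCyl_eq (show ‖u‖ = ‖EuclideanSpace.single (0 : Fin (n+1)) (1:ℝ)‖ by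
      rw [hu, EuclideanSpace.norm_single]; simp) θ, vol_myCyl_single]
  have step2 : μ.toSphere (capS u θ) ≤ c * V := by
    rw [μ.toSphere_apply' hcap, finrank_euclideanSpace_fin]
    apply mul_le_mul_right
    calc μ (Set.Ioo (0:ℝ) 1 • ((↑) '' capS u θ)) ≤ μ (myCyl u θ) :=
          measure_mono (smul_cap_subset hu hθ)
      _ = V := hcylvol
  have step3 : μ.toSphere Set.univ = c * A := by
    rw [Measure.toSphere_apply_univ, finrank_euclideanSpace_fin, hA]
  have hle : sphereMeasure (n+1) (capS u θ) ≤ A⁻¹ * V := by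
    have h1 : sphereMeasure (n+1) (capS u θ)
        = (μ.toSphere Set.univ)⁻¹ * μ.toSphere (capS u θ) := by
      rw [sphereMeasure, Measure.smul_apply, smul_eq_mul]
    rw [h1, step3]
    calc (c * A)⁻¹ * μ.toSphere (capS u θ) ≤ (c * A)⁻¹ * (c * V) :=
          mul_le_mul_right step2 _
      _ = A⁻¹ * V := by
          rw [ENNReal.mul_inv (Or.inl hc0) (Or.inl hctop)]
          have h2 : c⁻¹ * A⁻¹ * (c * V) = (c⁻¹ * c) * (A⁻¹ * V) := by ring
          rw [h2, ENNReal.inv_mul_cancel hc0 hctop, one_mul]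
  have htot : (sphereMeasure (n+1) (capS u θ)).toReal ≤ (A⁻¹ * V).toReal :=
    ENNReal.toReal_mono
      (ENNReal.mul_ne_top (ENNReal.inv_ne_top.2 hA0) hVtop) hle
  have hAV : (A⁻¹ * V).toReal = V.toReal / A.toReal := by
    rw [ENNReal.toReal_mul, ENNReal.toReal_inv, inv_mul_eq_div]
  have hAval : A.toReal = Real.sqrt π ^ (n+1) / Real.Gamma (((n:ℝ)+1)/2 + 1) := by
    rw [hA, hμ, EuclideanSpace.volume_ball]
    simp only [Fintype.card_fin]
    rw [ENNReal.ofReal_one, one_pow, one_mul, ENNReal.toReal_ofReal (by positivity)]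
    push_cast
    ring_nf
  have hVval : V.toReal = θ ^ n * (Real.sqrt π ^ n / Real.Gamma ((n:ℝ)/2 + 1)) := by
    rw [hV, EuclideanSpace.volume_ball]
    simp only [Fintype.card_fin]
    rw [ENNReal.toReal_mul, ENNReal.toReal_pow, ENNReal.toReal_ofReal hθ.1.le,
      ENNReal.toReal_ofReal (by positivity)]
  calc (sphereMeasure (n+1) (capS u θ)).toReal ≤ (A⁻¹ * V).toReal := htot
    _ = V.toReal / A.toReal := hAV
    _ ≤ π/2 * Real.sqrt ((n:ℝ)+1) * θ ^ (n + 1 - 2) := by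
        rw [hAval, hVval]
        exact my_final_arith n hn hθ.1 hθ.2
    _ = π/2 * Real.sqrt ((n+1 : ℕ) : ℝ) * θ ^ (n + 1 - 2) := by push_cast; ring
end
end

section
/- Fix p ∈ [1,∞), d ≥ 3, θ ∈ (0, π/2], and v ∈ S^{d−1}. Let B be the unit ball in ℝ^d and B⁻ = B − conv(C(v,θ)) be the ball with the convex hull of the cap C(v,θ) removed. Then D_p(B, B⁻) ≥ f(d,p)·θ^{2 + (d−1)/p} for some positive function f depending only on d and p. -/
open MeasureTheory Real Set
open scoped RealInnerProductSpace

noncomputable section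

-- ### Auxiliary lemmas ###

section Aux

variable {d : ℕ}

lemma bddAbove_inner_image {K : Set (EuclideanSpace ℝ (Fin d))}
    (hK : K ⊆ Metric.closedBall 0 1) (y : EuclideanSpace ℝ (Fin d)) :
    BddAbove ((fun x => ⟪x, y⟫) '' K) := by
  refine ⟨‖y‖, fun z hz => ?_⟩
  obtain ⟨x, hx, rfl⟩ := hz
  calc ⟪x, y⟫ ≤ ‖x‖ * ‖y‖ := real_inner_le_norm x y
    _ ≤ ‖y‖ := mul_le_of_le_one_left (norm_nonneg y) (mem_closedBall_zero_iff.1 (hK hx))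

lemma le_suppFn {K : Set (EuclideanSpace ℝ (Fin d))} (hK : K ⊆ Metric.closedBall 0 1)
    {x : EuclideanSpace ℝ (Fin d)} (hx : x ∈ K) (y : EuclideanSpace ℝ (Fin d)) :
    ⟪x, y⟫ ≤ suppFn K y :=
  le_csSup (bddAbove_inner_image hK y) ⟨x, hx, rfl⟩

lemma suppFn_le {K : Set (EuclideanSpace ℝ (Fin d))} (hne : K.Nonempty)
    {y : EuclideanSpace ℝ (Fin d)} {c : ℝ}
    (h : ∀ x ∈ K, ⟪x, y⟫ ≤ c) : suppFn K y ≤ c := by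
  refine csSup_le (hne.image _) ?_
  rintro z ⟨x, hx, rfl⟩
  exact h x hx

lemma suppFn_closedBall {y : EuclideanSpace ℝ (Fin d)} (hy : ‖y‖ = 1) :
    suppFn (Metric.closedBall 0 1) y = 1 := by
  refine le_antisymm (suppFn_le ⟨0, by simp⟩ fun x hx => ?_) ?_
  · calc ⟪x, y⟫ ≤ ‖x‖ * ‖y‖ := real_inner_le_norm x y
      _ ≤ 1 := by
        rw [hy, mul_one]
        exact mem_closedBall_zero_iff.1 hx
  · have hm : y ∈ Metric.closedBall (0 : EuclideanSpace ℝ (Fin d)) 1 :=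
      mem_closedBall_zero_iff.2 hy.le
    have h := le_suppFn le_rfl hm y
    rwa [real_inner_self_eq_norm_sq, hy, one_pow] at h

lemma lipschitzWith_suppFn {K : Set (EuclideanSpace ℝ (Fin d))} (hne : K.Nonempty)
    (hK : K ⊆ Metric.closedBall 0 1) : LipschitzWith 1 (suppFn K) := by
  refine LipschitzWith.of_dist_le_mul fun y y' => ?_
  rw [NNReal.coe_one, one_mul, Real.dist_eq, dist_eq_norm]
  have key : ∀ a b : EuclideanSpace ℝ (Fin d), suppFn K a - suppFn K b ≤ ‖a - b‖ := by
    intro a b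
    rw [sub_le_iff_le_add]
    refine suppFn_le hne fun x hx => ?_
    have h1 : ⟪x, a⟫ = ⟪x, b⟫ + ⟪x, a - b⟫ := by
      rw [← inner_add_right]
      congr 1
      abel
    have h2 : ⟪x, a - b⟫ ≤ ‖a - b‖ := by
      calc ⟪x, a - b⟫ ≤ ‖x‖ * ‖a - b‖ := real_inner_le_norm _ _
        _ ≤ ‖a - b‖ := mul_le_of_le_one_left (norm_nonneg _) (mem_closedBall_zero_iff.1 (hK hx))
    have h3 : ⟪x, b⟫ ≤ suppFn K b := le_suppFn hK hx b
    linarith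
  rw [abs_sub_le_iff]
  constructor
  · exact key y y'
  · rw [← norm_neg, neg_sub]; exact key y' y

variable {v ω : EuclideanSpace ℝ (Fin d)} {θ : ℝ}

/-- Unit vectors with inner product `> cos θ` against `v` are in the cap. -/
lemma mem_cap_of_cos_lt (hθ0 : 0 < θ) (hθ : θ ≤ π) (hv : ‖v‖ = 1)
    {u : EuclideanSpace ℝ (Fin d)}
    (hu : ‖u‖ = 1) (h : Real.cos θ < ⟪u, v⟫) : u ∈ cap v θ := by
  refine ⟨hu, ?_⟩
  by_contra hcon
  push_neg at hcon
  have h1 : Real.cos (Real.arccos ⟪u, v⟫) ≤ Real.cos θ :=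
    Real.cos_le_cos_of_nonneg_of_le_pi hθ0.le (Real.arccos_le_pi _) hcon
  have h2 : ⟪u, v⟫ ≤ 1 := by
    have := real_inner_le_norm u v
    rw [hu, hv] at this; simpa using this
  rw [Real.cos_arccos (by nlinarith [Real.neg_one_le_cos θ]) h2] at h1
  linarith

lemma convexHull_cap_subset (hθπ : θ ≤ π) (hv : ‖v‖ = 1) :
    convexHull ℝ (cap v θ) ⊆ {x | Real.cos θ ≤ ⟪x, v⟫} := by
  have hlin : IsLinearMap ℝ (fun x : EuclideanSpace ℝ (Fin d) => ⟪x, v⟫) :=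
    ⟨fun x y => inner_add_left x y v, fun c x => real_inner_smul_left x v c⟩
  refine convexHull_min ?_ (convex_halfSpace_ge hlin _)
  rintro x ⟨hx1, hx2⟩
  have hb : |⟪x, v⟫| ≤ 1 := by
    have := abs_real_inner_le_norm x v
    rw [hx1, hv] at this; simpa using this
  have h1 : Real.cos θ < Real.cos (Real.arccos ⟪x, v⟫) :=
    Real.cos_lt_cos_of_nonneg_of_le_pi (Real.arccos_nonneg _) hθπ hx2
  rw [Real.cos_arccos (neg_le_of_abs_le hb) (le_of_abs_le hb)] at h1
  exact h1.le

/-- Points of the form `t • v + c • ω` with `cos (θ/2) ≤ t` and `c² ≤ 1 - t²`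
belong to the convex hull of the cap. -/
lemma smul_add_smul_mem_convexHull_cap (hv : ‖v‖ = 1) (hω : ‖ω‖ = 1) (hωv : ⟪ω, v⟫ = 0)
    (hθ0 : 0 < θ) (hθ : θ ≤ π / 2) {t c : ℝ} (ht : Real.cos (θ / 2) ≤ t) (ht1 : t ≤ 1)
    (hc0 : 0 ≤ c) (hc : c ^ 2 ≤ 1 - t ^ 2) :
    t • v + c • ω ∈ convexHull ℝ (cap v θ) := by
  have hπ := Real.pi_pos
  have hcosθ2 : 0 < Real.cos (θ / 2) :=
    Real.cos_pos_of_mem_Ioo ⟨by linarith, by linarith⟩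
  have ht0 : 0 < t := lt_of_lt_of_le hcosθ2 ht
  have hvω : ⟪v, ω⟫ = 0 := by rw [real_inner_comm]; exact hωv
  have hcoslt : Real.cos θ < Real.cos (θ / 2) :=
    Real.cos_lt_cos_of_nonneg_of_le_pi (by linarith) (by linarith) (by linarith)
  set s : ℝ := Real.sqrt (1 - t ^ 2) with hs_def
  have h1t : (0 : ℝ) ≤ 1 - t ^ 2 := le_trans (sq_nonneg c) hc
  have hs2 : s ^ 2 = 1 - t ^ 2 := Real.sq_sqrt h1t
  have hs0 : 0 ≤ s := Real.sqrt_nonneg _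
  -- norms of the candidate cap points
  have hnorm : ∀ r : ℝ, r ^ 2 = s ^ 2 → ‖t • v + r • ω‖ = 1 := by
    intro r hr
    have hsq : ‖t • v + r • ω‖ ^ 2 = 1 := by
      rw [norm_add_sq_real]
      rw [real_inner_smul_left, real_inner_smul_right, hvω]
      rw [norm_smul, norm_smul, hv, hω]
      simp only [Real.norm_eq_abs, mul_one, mul_zero]
      rw [sq_abs, sq_abs, hr, hs2]; ring
    nlinarith [norm_nonneg (t • v + r • ω)]
  have hinner : ∀ r : ℝ, ⟪t • v + r • ω, v⟫ = t := by
    intro r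
    rw [inner_add_left, real_inner_smul_left, real_inner_smul_left, hωv,
      real_inner_self_eq_norm_sq, hv]
    ring
  rcases eq_or_lt_of_le hs0 with hs | hs
  · -- s = 0 : then t = 1, c = 0, point is v
    have h1 : 1 - t ^ 2 = 0 := by rw [← hs2, ← hs]; ring
    have hteq : t = 1 := by nlinarith
    have hceq : c = 0 := by nlinarith
    have : t • v + c • ω = v := by rw [hteq, hceq, one_smul, zero_smul, add_zero]
    rw [this]
    refine subset_convexHull ℝ _ (mem_cap_of_cos_lt hθ0 (by linarith) hv hv ?_)
    rw [real_inner_self_eq_norm_sq, hv]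
    calc Real.cos θ < Real.cos (θ / 2) := hcoslt
      _ ≤ 1 := Real.cos_le_one _
      _ = 1 ^ 2 := by norm_num
  · -- s > 0 : the point is on the segment between two cap points
    have hcuP : t • v + s • ω ∈ cap v θ :=
      mem_cap_of_cos_lt hθ0 (by linarith) hv (hnorm s rfl)
        (by rw [hinner]; linarith)
    have hcuM : t • v + (-s) • ω ∈ cap v θ :=
      mem_cap_of_cos_lt hθ0 (by linarith) hv (hnorm (-s) (by ring))
        (by rw [hinner]; linarith)
    have hcs : c ≤ s := by nlinarith
    have hcd : c / s ≤ 1 := (div_le_one hs).2 hcs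
    have hcd0 : 0 ≤ c / s := div_nonneg hc0 hs.le
    refine (convex_convexHull ℝ (cap v θ)).segment_subset
      (subset_convexHull ℝ _ hcuM) (subset_convexHull ℝ _ hcuP) ?_
    refine ⟨1 - (1 + c / s) / 2, (1 + c / s) / 2, by linarith, by linarith, by ring, ?_⟩
    match_scalars
    · ring
    · field_simp
      ring

lemma le_of_sq_le_sq' {a b : ℝ} (ha : 0 ≤ a) (hb : 0 ≤ b) (h : a ^ 2 ≤ b ^ 2) : a ≤ b := by
  nlinarith

lemma mem_convexHull_cap_of_slab (hv : ‖v‖ = 1) (hω : ‖ω‖ = 1) (hωv : ⟪ω, v⟫ = 0)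
    (hθ0 : 0 < θ) (hθ : θ ≤ π / 2) {x : EuclideanSpace ℝ (Fin d)}
    (hx1 : ‖x‖ ≤ 1) (hxv : Real.cos (θ / 2) ≤ ⟪x, v⟫) :
    x ∈ convexHull ℝ (cap v θ) := by
  set t : ℝ := ⟪x, v⟫ with ht_def
  set w : EuclideanSpace ℝ (Fin d) := x - t • v with hw_def
  have hwv : ⟪w, v⟫ = 0 := by
    rw [hw_def, inner_sub_left, real_inner_smul_left, real_inner_self_eq_norm_sq, hv]
    ring
  have hvw : ⟪v, w⟫ = 0 := by rw [real_inner_comm]; exact hwv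
  have hxw : x = t • v + w := by rw [hw_def]; abel
  have hx2 : ‖x‖ ^ 2 = t ^ 2 + ‖w‖ ^ 2 := by
    conv_lhs => rw [hxw]
    rw [norm_add_sq_real, real_inner_smul_left, hvw, norm_smul, hv]
    simp [Real.norm_eq_abs, sq_abs]
  have ht1 : t ≤ 1 := by
    have := real_inner_le_norm x v
    rw [hv, mul_one] at this
    exact this.trans hx1
  by_cases hw : w = 0
  · have : x = t • v + (0 : ℝ) • ω := by rw [zero_smul, add_zero, hxw, hw, add_zero]
    rw [this]
    refine smul_add_smul_mem_convexHull_cap hv hω hωv hθ0 hθ hxv ht1 le_rfl ?_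
    have : ‖w‖ = 0 := by rw [hw, norm_zero]
    nlinarith [hx2, hx1, norm_nonneg x]
  · set ω' : EuclideanSpace ℝ (Fin d) := ‖w‖⁻¹ • w with hω'_def
    have hwne : ‖w‖ ≠ 0 := norm_ne_zero_iff.2 hw
    have hω'1 : ‖ω'‖ = 1 := by
      rw [hω'_def, norm_smul, norm_inv, norm_norm, inv_mul_cancel₀ hwne]
    have hω'v : ⟪ω', v⟫ = 0 := by
      rw [hω'_def, real_inner_smul_left, hwv, mul_zero]
    have : x = t • v + ‖w‖ • ω' := by
      rw [hω'_def, smul_inv_smul₀ hwne, hxw]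
    rw [this]
    refine smul_add_smul_mem_convexHull_cap hv hω'1 hω'v hθ0 hθ hxv ht1 (norm_nonneg w) ?_
    nlinarith [hx2, hx1, norm_nonneg x]

lemma neg_v_mem_Bminus (hθ0 : 0 ≤ θ) (hθ : θ ≤ π / 2) (hv : ‖v‖ = 1) :
    -v ∈ Metric.closedBall (0 : EuclideanSpace ℝ (Fin d)) 1 \ convexHull ℝ (cap v θ) := by
  constructor
  · rw [mem_closedBall_zero_iff, norm_neg, hv]
  · intro hcon
    have h1 := convexHull_cap_subset (by linarith [Real.pi_pos]) hv hcon
    rw [mem_setOf_eq, inner_neg_left, real_inner_self_eq_norm_sq, hv] at h1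
    have h2 : 0 ≤ Real.cos θ := Real.cos_nonneg_of_mem_Icc ⟨by linarith [Real.pi_pos], hθ⟩
    nlinarith

set_option maxHeartbeats 1000000 in
lemma inner_le_of_not_mem_hull (hθ0 : 0 < θ) (hθ : θ ≤ π / 2) (hv : ‖v‖ = 1)
    {y x : EuclideanSpace ℝ (Fin d)} (hy : ‖y‖ = 1) (hyv : Real.cos (θ / 8) < ⟪y, v⟫)
    (hx1 : ‖x‖ ≤ 1) (hxv : ⟪x, v⟫ < Real.cos (θ / 2)) : ⟪x, y⟫ ≤ Real.cos (θ / 8) := by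
  have hπ := Real.pi_pos
  by_contra h
  push_neg at h
  have hθ2 : (0 : ℝ) < θ ^ 2 := by positivity
  have hk0 : 0 ≤ Real.cos (θ / 8) :=
    Real.cos_nonneg_of_mem_Icc ⟨by linarith, by linarith⟩
  have hA : 1 - (θ / 8) ^ 2 / 2 ≤ Real.cos (θ / 8) := Real.one_sub_sq_div_two_le_cos
  have hx1sq : ‖x‖ ^ 2 ≤ 1 := by nlinarith [norm_nonneg x]
  have hxy2 : ‖x - y‖ ^ 2 = ‖x‖ ^ 2 - 2 * ⟪x, y⟫ + 1 := by
    rw [norm_sub_sq_real, hy]; norm_num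
  have hxyle : ‖x - y‖ ≤ θ / 8 := by
    refine le_of_sq_le_sq' (norm_nonneg _) (by positivity) ?_
    nlinarith
  have hyv2 : ‖y - v‖ ^ 2 = 2 - 2 * ⟪y, v⟫ := by
    rw [norm_sub_sq_real, hy, hv]; ring
  have hyvle : ‖y - v‖ ≤ θ / 8 := by
    refine le_of_sq_le_sq' (norm_nonneg _) (by positivity) ?_
    nlinarith
  have hxvle : ‖x - v‖ ≤ θ / 4 := by
    have hsplit : x - v = (x - y) + (y - v) := by abel
    calc ‖x - v‖ = ‖(x - y) + (y - v)‖ := by rw [← hsplit]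
      _ ≤ ‖x - y‖ + ‖y - v‖ := norm_add_le _ _
      _ ≤ θ / 8 + θ / 8 := add_le_add hxyle hyvle
      _ = θ / 4 := by ring
  have hxvsq : ‖x - v‖ ^ 2 ≤ (θ / 4) ^ 2 :=
    pow_le_pow_left₀ (norm_nonneg _) hxvle 2
  have hxv2 : ‖x - v‖ ^ 2 = ‖x‖ ^ 2 - 2 * ⟪x, v⟫ + 1 := by
    rw [norm_sub_sq_real, hv]; norm_num
  have hxn : Real.cos (θ / 8) < ‖x‖ := by
    have h1 := real_inner_le_norm x y
    rw [hy, mul_one] at h1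
    linarith
  have hxn2 : Real.cos (θ / 8) ^ 2 ≤ ‖x‖ ^ 2 := pow_le_pow_left₀ hk0 hxn.le 2
  have hcos2 : Real.cos (θ / 2) ≤ 1 - 2 / π ^ 2 * (θ / 2) ^ 2 :=
    Real.cos_le_one_sub_mul_cos_sq (by rw [abs_of_nonneg (by linarith)]; linarith)
  have hπ2 : π ^ 2 < 10 := by nlinarith [Real.pi_lt_d2]
  have hfrac : θ ^ 2 / 20 ≤ 2 / π ^ 2 * (θ / 2) ^ 2 := by
    have heq : 2 / π ^ 2 * (θ / 2) ^ 2 = θ ^ 2 / (2 * π ^ 2) := by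
      field_simp
    rw [heq]
    exact (div_le_div_iff_of_pos_left hθ2 (by norm_num) (by positivity)).2 (by nlinarith)
  have hcos2' : Real.cos (θ / 2) ≤ 1 - θ ^ 2 / 20 := by linarith
  have key1 : Real.cos (θ / 8) ^ 2 + 1 - (θ / 4) ^ 2 ≤ 2 * ⟪x, v⟫ := by
    linarith [hxv2, hxvsq, hxn2]
  have key2 : 2 * Real.cos (θ / 8) - 1 ≤ Real.cos (θ / 8) ^ 2 := by
    have h0 := sq_nonneg (Real.cos (θ / 8) - 1)
    have hexp : (Real.cos (θ / 8) - 1) ^ 2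
        = Real.cos (θ / 8) ^ 2 - 2 * Real.cos (θ / 8) + 1 := by ring
    linarith
  have e4 : (θ / 4) ^ 2 = θ ^ 2 / 16 := by ring
  have e8 : (θ / 8) ^ 2 = θ ^ 2 / 64 := by ring
  linarith

open scoped Pointwise ENNReal in
lemma arccos_lt_of_cos_lt {u t : ℝ} (ht0 : 0 < t) (htπ : t ≤ π) (hu1 : u ≤ 1)
    (h : Real.cos t < u) : Real.arccos u < t := by
  by_contra hcon
  push_neg at hcon
  have h1 : Real.cos (Real.arccos u) ≤ Real.cos t :=
    Real.cos_le_cos_of_nonneg_of_le_pi ht0.le (Real.arccos_le_pi _) hcon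
  rw [Real.cos_arccos (by nlinarith [Real.neg_one_le_cos t]) hu1] at h1
  linarith

lemma measurableSet_capS (v : EuclideanSpace ℝ (Fin d)) (t : ℝ) :
    MeasurableSet (capS v t) := by
  have : IsOpen (capS v t) := by
    exact isOpen_lt (Real.continuous_arccos.comp
      (Continuous.inner continuous_subtype_val continuous_const)) continuous_const
  exact this.measurableSet

lemma isFiniteMeasure_sphereMeasure (hd : 1 ≤ d) : IsFiniteMeasure (sphereMeasure d) := by
  constructor
  rw [sphereMeasure, Measure.smul_apply, smul_eq_mul]
  rcases eq_or_ne ((volume : Measure (EuclideanSpace ℝ (Fin d))).toSphere Set.univ) 0 with h | h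
  · rw [h, mul_zero]; exact ENNReal.zero_lt_top
  · rw [ENNReal.inv_mul_cancel h (measure_ne_top _ _)]
    exact ENNReal.one_lt_top

lemma toSphere_univ_ne_zero (hd : 1 ≤ d) :
    ((volume : Measure (EuclideanSpace ℝ (Fin d))).toSphere Set.univ) ≠ 0 := by
  rw [Measure.toSphere_apply_univ, finrank_euclideanSpace_fin]
  exact mul_ne_zero (by exact_mod_cast Nat.one_le_iff_ne_zero.1 hd)
    (Metric.measure_ball_pos _ _ one_pos).ne'

open scoped Pointwise ENNReal in
set_option maxHeartbeats 1600000 in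
lemma toReal_sphereMeasure_capS_ge (hd : 3 ≤ d) (hv : ‖v‖ = 1) {t : ℝ}
    (ht0 : 0 < t) (ht : t ≤ π / 16) :
    (((volume : Measure (EuclideanSpace ℝ (Fin d))).toSphere Set.univ).toReal)⁻¹ *
        ((1 / 4) * (2 / (π * Real.sqrt d)) ^ (d - 1)) * t ^ (d - 1)
      ≤ (sphereMeasure d (capS v t)).toReal := by
  have hπ := Real.pi_pos
  have hd0 : (0 : ℝ) < d := by exact_mod_cast Nat.lt_of_lt_of_le (by norm_num) hd
  have hsd : (0 : ℝ) < Real.sqrt d := Real.sqrt_pos.2 hd0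
  haveI : NeZero d := ⟨by omega⟩
  -- orthonormal basis with `b 0 = v`
  have hcard : Module.finrank ℝ (EuclideanSpace ℝ (Fin d)) = Fintype.card (Fin d) := by
    simp [finrank_euclideanSpace_fin]
  have horth : Orthonormal ℝ (Set.restrict ({0} : Set (Fin d)) (fun _ => v)) := by
    constructor
    · intro i; exact hv
    · intro i j hij
      exact absurd (Subtype.ext ((Set.mem_singleton_iff.1 i.2).trans
        (Set.mem_singleton_iff.1 j.2).symm)) hij
  obtain ⟨b, hb⟩ := Orthonormal.exists_orthonormalBasis_extension_of_card_eq hcard horth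
  have hb0 : b 0 = v := hb 0 rfl
  set r' : ℝ := t / (π * Real.sqrt d) with hr'_def
  have hr'0 : 0 < r' := by positivity
  have hr'2 : (d : ℝ) * r' ^ 2 = t ^ 2 / π ^ 2 := by
    rw [hr'_def, div_pow, mul_pow, Real.sq_sqrt hd0.le]
    field_simp
  set Box : Set (Fin d → ℝ) :=
    Set.univ.pi (fun i => if i = 0 then Ioo (1 / 2 : ℝ) (3 / 4) else Ioo (-r') r') with hBox_def
  have hBoxm : MeasurableSet Box := by
    refine MeasurableSet.univ_pi fun i => ?_
    split <;> exact measurableSet_Ioo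
  set T : Set (EuclideanSpace ℝ (Fin d)) :=
    (MeasurableEquiv.toLp 2 (Fin d → ℝ)).symm ⁻¹' Box with hT_def
  have hTm : MeasurableSet T := (MeasurableEquiv.toLp 2 (Fin d → ℝ)).symm.measurable hBoxm
  set S : Set (EuclideanSpace ℝ (Fin d)) := ⇑b.repr ⁻¹' T with hS_def
  -- the box sits inside the solid cone over the cap
  have hsub : S ⊆ Ioo (0 : ℝ) 1 • (Subtype.val '' capS v t) := by
    intro z hz
    have hz' : ∀ i : Fin d, b.repr z i ∈
        (if i = 0 then Ioo (1 / 2 : ℝ) (3 / 4) else Ioo (-r') r') := by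
      intro i
      exact Set.mem_univ_pi.1 hz i
    have hz0 : b.repr z 0 ∈ Ioo (1 / 2 : ℝ) (3 / 4) := by simpa using hz' 0
    have hzi : ∀ i : Fin d, i ≠ 0 → b.repr z i ∈ Ioo (-r') r' := by
      intro i hi
      have := hz' i
      rwa [if_neg hi] at this
    set f : Fin d → ℝ := fun i => b.repr z i with hf_def
    have hnormf : ‖z‖ ^ 2 = ∑ i, f i ^ 2 := by
      rw [← b.repr.norm_map z, EuclideanSpace.norm_eq, Real.sq_sqrt (by positivity)]
      simp [hf_def, sq_abs]
    have hsplit : ∑ i, f i ^ 2 = f 0 ^ 2 + ∑ i ∈ ({0}ᶜ : Finset (Fin d)), f i ^ 2 :=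
      Fintype.sum_eq_add_sum_compl 0 _
    have hSig0 : (0 : ℝ) ≤ ∑ i ∈ ({0}ᶜ : Finset (Fin d)), f i ^ 2 :=
      Finset.sum_nonneg fun i _ => sq_nonneg _
    have hSigle : ∑ i ∈ ({0}ᶜ : Finset (Fin d)), f i ^ 2 ≤ (d : ℝ) * r' ^ 2 := by
      have hle : ∀ i ∈ ({0}ᶜ : Finset (Fin d)), f i ^ 2 ≤ r' ^ 2 := by
        intro i hi
        have hi' : i ≠ 0 := by simpa using hi
        have h2 := hzi i hi'
        exact sq_le_sq' h2.1.le h2.2.le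
      calc ∑ i ∈ ({0}ᶜ : Finset (Fin d)), f i ^ 2
          ≤ ({0}ᶜ : Finset (Fin d)).card • r' ^ 2 := Finset.sum_le_card_nsmul _ _ _ hle
        _ = (({0}ᶜ : Finset (Fin d)).card : ℝ) * r' ^ 2 := nsmul_eq_mul _ _
        _ ≤ (d : ℝ) * r' ^ 2 := by
            refine mul_le_mul_of_nonneg_right ?_ (sq_nonneg _)
            exact_mod_cast (Finset.card_le_univ _).trans (by simp)
    have hA : ‖z‖ ^ 2 ≤ f 0 ^ 2 + t ^ 2 / π ^ 2 := by
      rw [hnormf, hsplit, ← hr'2]; linarith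
    have hf01 : 1 / 2 < f 0 := hz0.1
    have hf02 : f 0 < 3 / 4 := hz0.2
    have hzsq_lb : 1 / 4 < ‖z‖ ^ 2 := by
      rw [hnormf, hsplit]; nlinarith
    have hz0' : 0 < ‖z‖ := by nlinarith [norm_nonneg z]
    have ht2 : t ^ 2 / π ^ 2 ≤ 1 / 256 := by
      rw [div_le_iff₀ (by positivity)]
      nlinarith
    have hzlt1 : ‖z‖ < 1 := by nlinarith [norm_nonneg z]
    -- cos t * ‖z‖ < f 0
    have hsin : 2 / π * t ≤ Real.sin t := Real.mul_le_sin ht0.le (by linarith)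
    have hsin2 : (2 / π * t) ^ 2 ≤ Real.sin t ^ 2 :=
      pow_le_pow_left₀ (by positivity) hsin 2
    have hsineq : Real.sin t ^ 2 = 1 - Real.cos t ^ 2 := Real.sin_sq t
    have hsin2' : 4 * t ^ 2 / π ^ 2 ≤ 1 - Real.cos t ^ 2 := by
      rw [← hsineq]
      calc 4 * t ^ 2 / π ^ 2 = (2 / π * t) ^ 2 := by field_simp; ring
        _ ≤ _ := hsin2
    have hcos0 : 0 ≤ Real.cos t := Real.cos_nonneg_of_mem_Icc ⟨by linarith, by linarith⟩
    have hkey : (Real.cos t * ‖z‖) ^ 2 < f 0 ^ 2 := by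
      have expand : (Real.cos t * ‖z‖) ^ 2 = Real.cos t ^ 2 * ‖z‖ ^ 2 := by ring
      rw [expand]
      have hq0 : 0 < t ^ 2 / π ^ 2 := by positivity
      have hcossq : Real.cos t ^ 2 ≤ 1 := by nlinarith [sq_nonneg (Real.sin t)]
      have e0 : 4 * t ^ 2 / π ^ 2 = 4 * (t ^ 2 / π ^ 2) := by ring
      have e1 : Real.cos t ^ 2 * ‖z‖ ^ 2 ≤ Real.cos t ^ 2 * (f 0 ^ 2 + t ^ 2 / π ^ 2) :=
        mul_le_mul_of_nonneg_left hA (sq_nonneg _)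
      have e2 : Real.cos t ^ 2 * f 0 ^ 2 ≤ (1 - 4 * (t ^ 2 / π ^ 2)) * f 0 ^ 2 := by
        refine mul_le_mul_of_nonneg_right ?_ (sq_nonneg _)
        linarith [hsin2', e0]
      have e3 : Real.cos t ^ 2 * (t ^ 2 / π ^ 2) ≤ t ^ 2 / π ^ 2 := by
        nlinarith [hcossq, hq0]
      have e4 : 0 < (t ^ 2 / π ^ 2) * (4 * f 0 ^ 2 - 1) := mul_pos hq0 (by nlinarith)
      nlinarith [e1, e2, e3, e4]
    have hkey' : Real.cos t * ‖z‖ < f 0 :=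
      lt_of_pow_lt_pow_left₀ 2 (by linarith) hkey
    -- the normalized vector
    have hinner : ⟪z, v⟫ = f 0 := by
      show ⟪z, v⟫ = b.repr z 0
      rw [OrthonormalBasis.repr_apply_apply, hb0]
      exact real_inner_comm v z
    have hu1 : ‖z‖⁻¹ * f 0 ≤ 1 := by
      have hf0z : f 0 ≤ ‖z‖ := by
        refine le_of_sq_le_sq' (by linarith) hz0'.le ?_
        rw [hnormf, hsplit]; linarith
      rw [inv_mul_eq_div, div_le_one hz0']
      exact hf0z
    have hcoslt : Real.cos t < ‖z‖⁻¹ * f 0 := by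
      rw [inv_mul_eq_div, lt_div_iff₀ hz0']
      exact hkey'
    refine Set.mem_smul.2 ⟨‖z‖, ⟨hz0', hzlt1⟩, ‖z‖⁻¹ • z, ?_, smul_inv_smul₀ hz0'.ne' z⟩
    refine ⟨⟨‖z‖⁻¹ • z, ?_⟩, ?_, rfl⟩
    · rw [mem_sphere_zero_iff_norm, norm_smul, norm_inv, norm_norm,
        inv_mul_cancel₀ hz0'.ne']
    · show Real.arccos ⟪‖z‖⁻¹ • z, v⟫ < t
      rw [real_inner_smul_left, hinner]
      exact arccos_lt_of_cos_lt ht0 (by linarith) hu1 hcoslt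
  -- volume computations
  have hvolS : volume S = volume Box := by
    rw [hS_def, b.measurePreserving_repr.measure_preimage hTm.nullMeasurableSet,
      hT_def, (EuclideanSpace.volume_preserving_symm_measurableEquiv_toLp (Fin d)).measure_preimage
        hBoxm.nullMeasurableSet]
  have hvolBox : volume Box
      = ENNReal.ofReal (1 / 4) * ENNReal.ofReal (2 * r') ^ (d - 1) := by
    rw [hBox_def, volume_pi_pi]
    have hval : ∀ i : Fin d,
        volume (if i = 0 then Ioo (1 / 2 : ℝ) (3 / 4) else Ioo (-r') r')
          = if i = 0 then ENNReal.ofReal (1 / 4) else ENNReal.ofReal (2 * r') := by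
      intro i
      split
      · rw [Real.volume_Ioo]; norm_num
      · rw [Real.volume_Ioo]; congr 1; ring
    rw [Finset.prod_congr rfl fun i _ => hval i]
    rw [Finset.prod_eq_mul_prod_sdiff_singleton_of_mem (Finset.mem_univ (0 : Fin d))]
    rw [if_pos rfl]
    congr 1
    have : ∀ i ∈ Finset.univ \ {(0 : Fin d)},
        (if i = 0 then ENNReal.ofReal (1 / 4) else ENNReal.ofReal (2 * r'))
          = ENNReal.ofReal (2 * r') := by
      intro i hi
      rw [if_neg (by simpa using (Finset.mem_sdiff.1 hi).2)]
    rw [Finset.prod_congr rfl this, Finset.prod_const]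
    congr 1
    rw [Finset.card_sdiff_of_subset (by simp), Finset.card_univ, Fintype.card_fin, Finset.card_singleton]
  -- assemble
  haveI := isFiniteMeasure_sphereMeasure (d := d) (by omega)
  set N := ((volume : Measure (EuclideanSpace ℝ (Fin d))).toSphere Set.univ) with hN_def
  have hN0 : N ≠ 0 := toSphere_univ_ne_zero (by omega)
  have hNtop : N ≠ ⊤ := measure_ne_top _ _
  have h1 : volume Box ≤ (volume : Measure (EuclideanSpace ℝ (Fin d))).toSphere (capS v t) := by
    rw [Measure.toSphere_apply' _ (measurableSet_capS v t), finrank_euclideanSpace_fin]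
    calc volume Box = volume S := hvolS.symm
      _ ≤ volume (Ioo (0 : ℝ) 1 • (Subtype.val '' capS v t)) := measure_mono hsub
      _ ≤ (d : ENNReal) * volume (Ioo (0 : ℝ) 1 • (Subtype.val '' capS v t)) :=
          le_mul_of_one_le_left (by positivity) (by exact_mod_cast (by omega : 1 ≤ d))
  have h2 : N⁻¹ * volume Box ≤ sphereMeasure d (capS v t) := by
    rw [sphereMeasure, Measure.smul_apply, smul_eq_mul]
    exact mul_le_mul_right h1 _
  have h3 : (N⁻¹ * volume Box).toReal ≤ (sphereMeasure d (capS v t)).toReal :=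
    ENNReal.toReal_le_toReal (by
      refine ENNReal.mul_ne_top (ENNReal.inv_ne_top.2 hN0) ?_
      rw [hvolBox]
      exact ENNReal.mul_ne_top ENNReal.ofReal_ne_top
        (ENNReal.pow_ne_top ENNReal.ofReal_ne_top)) (measure_ne_top _ _) |>.mpr h2
  refine le_trans (le_of_eq ?_) h3
  rw [hvolBox, ENNReal.toReal_mul, ENNReal.toReal_mul, ENNReal.toReal_inv,
    ENNReal.toReal_pow, ENNReal.toReal_ofReal (by norm_num),
    ENNReal.toReal_ofReal (by positivity)]
  have : 2 * r' = 2 / (π * Real.sqrt d) * t := by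
    rw [hr'_def]; field_simp
  rw [this, mul_pow]
  ring

lemma suppFn_Bminus_le (hθ0 : 0 < θ) (hθ2 : θ ≤ π / 2) (hv : ‖v‖ = 1)
    (hω : ‖ω‖ = 1) (hωv : ⟪ω, v⟫ = 0) {y : EuclideanSpace ℝ (Fin d)}
    (hy : ‖y‖ = 1) (hyv : Real.cos (θ / 8) < ⟪y, v⟫) :
    suppFn (Metric.closedBall 0 1 \ convexHull ℝ (cap v θ)) y ≤ Real.cos (θ / 8) := by
  refine suppFn_le ⟨-v, neg_v_mem_Bminus hθ0.le hθ2 hv⟩ fun x hx => ?_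
  have hx1 : ‖x‖ ≤ 1 := mem_closedBall_zero_iff.1 hx.1
  have hxv : ⟪x, v⟫ < Real.cos (θ / 2) := by
    by_contra hcon
    push_neg at hcon
    exact hx.2 (mem_convexHull_cap_of_slab hv hω hωv hθ0 hθ2 hx1 hcon)
  exact inner_le_of_not_mem_hull hθ0 hθ2 hv hy hyv hx1 hxv


end Aux

set_option maxHeartbeats 1600000 in
/-- For `p ∈ [1,∞)`, `d ≥ 3`, `θ ∈ (0, π/2]` and `v ∈ S^{d-1}`, the `D_p` distance between
the unit ball `B` and `B⁻ = B - conv(C(v,θ))` is at least `f(d,p)·θ^(2+(d-1)/p)` for some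
positive `f` depending only on `d` and `p`. -/
theorem dp_ball_minus_cap_lower (p : ℝ) (hp : 1 ≤ p) (d : ℕ) (hd : 3 ≤ d) :
    ∃ c : ℝ, 0 < c ∧ ∀ θ ∈ Set.Ioc (0 : ℝ) (π / 2),
      ∀ v : EuclideanSpace ℝ (Fin d), ‖v‖ = 1 →
        c * θ ^ (2 + ((d : ℝ) - 1) / p) ≤
          Dp p (Metric.closedBall 0 1)
            (Metric.closedBall 0 1 \ convexHull ℝ (cap v θ)) := by
  have hπ := Real.pi_pos
  have hp0 : 0 < p := by linarith
  have hd0 : (0 : ℝ) < d := by exact_mod_cast Nat.lt_of_lt_of_le (by norm_num) hd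
  have hsd : (0 : ℝ) < Real.sqrt d := Real.sqrt_pos.2 hd0
  haveI : NeZero d := ⟨by omega⟩
  haveI := isFiniteMeasure_sphereMeasure (d := d) (by omega)
  set N := ((volume : Measure (EuclideanSpace ℝ (Fin d))).toSphere Set.univ) with hN_def
  have hN0 : N ≠ 0 := toSphere_univ_ne_zero (by omega)
  have hNtop : N ≠ ⊤ := measure_ne_top _ _
  have hNr : 0 < N.toReal := ENNReal.toReal_pos hN0 hNtop
  set c₁ : ℝ := (N.toReal)⁻¹ * ((1 / 4) * (2 / (π * Real.sqrt d)) ^ (d - 1)) * (1 / 8) ^ (d - 1)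
    with hc1_def
  have hc₁ : 0 < c₁ := by positivity
  set c₂ : ℝ := 1 / (32 * π ^ 2) with hc2_def
  have hc₂ : 0 < c₂ := by positivity
  refine ⟨c₂ * c₁ ^ (1 / p), by positivity, ?_⟩
  rintro θ ⟨hθ0, hθ2⟩ v hv
  -- a unit vector orthogonal to v
  have hcard : Module.finrank ℝ (EuclideanSpace ℝ (Fin d)) = Fintype.card (Fin d) := by
    simp [finrank_euclideanSpace_fin]
  have horth : Orthonormal ℝ (Set.restrict ({0} : Set (Fin d)) (fun _ => v)) := by
    constructor
    · intro i; exact hv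
    · intro i j hij
      exact absurd (Subtype.ext ((Set.mem_singleton_iff.1 i.2).trans
        (Set.mem_singleton_iff.1 j.2).symm)) hij
  obtain ⟨b, hb⟩ := Orthonormal.exists_orthonormalBasis_extension_of_card_eq hcard horth
  have hb0 : b 0 = v := hb 0 rfl
  set ω : EuclideanSpace ℝ (Fin d) := b ⟨1, by omega⟩ with hω_def
  have hne10 : (⟨1, by omega⟩ : Fin d) ≠ 0 := by simp [Fin.ext_iff]
  have hω1 : ‖ω‖ = 1 := b.orthonormal.1 _
  have hωv : ⟪ω, v⟫ = 0 := by rw [← hb0]; exact b.orthonormal.2 hne10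
  -- the two bodies
  set B : Set (EuclideanSpace ℝ (Fin d)) := Metric.closedBall 0 1 with hB_def
  set Bm : Set (EuclideanSpace ℝ (Fin d)) := B \ convexHull ℝ (cap v θ) with hBm_def
  have hBmne : Bm.Nonempty := ⟨-v, neg_v_mem_Bminus hθ0.le hθ2 hv⟩
  have hBmsub : Bm ⊆ B := diff_subset
  have hBne : B.Nonempty := ⟨0, by simp [hB_def]⟩
  -- the integrand
  set g : Metric.sphere (0 : EuclideanSpace ℝ (Fin d)) 1 → ℝ :=
    fun y => |suppFn B (y : EuclideanSpace ℝ (Fin d))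
      - suppFn Bm (y : EuclideanSpace ℝ (Fin d))| ^ p with hg_def
  have hgc : Continuous g := by
    refine Continuous.rpow_const ?_ (fun y => Or.inr hp0.le)
    exact (((lipschitzWith_suppFn hBne subset_rfl).continuous.comp continuous_subtype_val).sub
      ((lipschitzWith_suppFn hBmne hBmsub).continuous.comp continuous_subtype_val)).abs
  have hgnn : ∀ y, 0 ≤ g y := fun y => Real.rpow_nonneg (abs_nonneg _) p
  have hgi : Integrable g (sphereMeasure d) :=
    hgc.integrable_of_hasCompactSupport (HasCompactSupport.of_compactSpace g)
  -- pointwise lower bound on the cap of half-angle θ/8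
  have hgap : ∀ y, y ∈ capS v (θ / 8) → c₂ * θ ^ 2 ≤
      |suppFn B (y : EuclideanSpace ℝ (Fin d)) - suppFn Bm (y : EuclideanSpace ℝ (Fin d))| := by
    intro y hy
    have hynorm : ‖(y : EuclideanSpace ℝ (Fin d))‖ = 1 := mem_sphere_zero_iff_norm.1 y.2
    have hyb : |⟪(y : EuclideanSpace ℝ (Fin d)), v⟫| ≤ 1 := by
      have := abs_real_inner_le_norm (y : EuclideanSpace ℝ (Fin d)) v
      rw [hynorm, hv] at this; simpa using this
    have hyv : Real.cos (θ / 8) < ⟪(y : EuclideanSpace ℝ (Fin d)), v⟫ := by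
      have h1 : Real.cos (θ / 8)
          < Real.cos (Real.arccos ⟪(y : EuclideanSpace ℝ (Fin d)), v⟫) :=
        Real.cos_lt_cos_of_nonneg_of_le_pi (Real.arccos_nonneg _) (by linarith) hy
      rwa [Real.cos_arccos (neg_le_of_abs_le hyb) (le_of_abs_le hyb)] at h1
    have hsupB : suppFn B (y : EuclideanSpace ℝ (Fin d)) = 1 := suppFn_closedBall hynorm
    have hsupBm : suppFn Bm (y : EuclideanSpace ℝ (Fin d)) ≤ Real.cos (θ / 8) :=
      suppFn_Bminus_le hθ0 hθ2 hv hω1 hωv hynorm hyv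
    have hcosub : Real.cos (θ / 8) ≤ 1 - 2 / π ^ 2 * (θ / 8) ^ 2 :=
      Real.cos_le_one_sub_mul_cos_sq (by rw [abs_of_nonneg (by linarith)]; linarith)
    have heq : 2 / π ^ 2 * (θ / 8) ^ 2 = c₂ * θ ^ 2 := by
      rw [hc2_def]; field_simp; ring
    rw [hsupB]
    calc c₂ * θ ^ 2 ≤ 1 - Real.cos (θ / 8) := by linarith
      _ ≤ 1 - suppFn Bm (y : EuclideanSpace ℝ (Fin d)) := by linarith
      _ ≤ |1 - suppFn Bm (y : EuclideanSpace ℝ (Fin d))| := le_abs_self _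
  have hgap' : ∀ y ∈ capS v (θ / 8), (c₂ * θ ^ 2) ^ p ≤ g y := fun y hy =>
    Real.rpow_le_rpow (by positivity) (hgap y hy) hp0.le
  -- lower bound for the integral
  have hmicap := toReal_sphereMeasure_capS_ge (v := v) hd hv (t := θ / 8)
    (by linarith) (by linarith)
  have hint : (c₂ * θ ^ 2) ^ p * ((sphereMeasure d) (capS v (θ / 8))).toReal
      ≤ ∫ y, g y ∂ sphereMeasure d := by
    calc (c₂ * θ ^ 2) ^ p * ((sphereMeasure d) (capS v (θ / 8))).toReal
        ≤ ∫ y in capS v (θ / 8), g y ∂ sphereMeasure d :=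
          setIntegral_ge_of_const_le_real (measurableSet_capS v _) (measure_ne_top _ _)
            hgap' hgi.integrableOn
      _ ≤ ∫ y, g y ∂ sphereMeasure d :=
          setIntegral_le_integral hgi (Filter.Eventually.of_forall hgnn)
  have hc1th : c₁ * θ ^ (d - 1) ≤ ((sphereMeasure d) (capS v (θ / 8))).toReal := by
    refine le_trans (le_of_eq ?_) hmicap
    rw [hc1_def, div_pow, div_pow, hN_def]
    rw [div_pow, one_pow]
    ring
  have hLB : (c₂ * θ ^ 2) ^ p * (c₁ * θ ^ (d - 1)) ≤ ∫ y, g y ∂ sphereMeasure d := by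
    refine le_trans (mul_le_mul_of_nonneg_left hc1th (by positivity)) hint
  -- conclude
  show c₂ * c₁ ^ (1 / p) * θ ^ (2 + ((d : ℝ) - 1) / p) ≤ Dp p B Bm
  rw [Dp]
  have hDp : ((c₂ * θ ^ 2) ^ p * (c₁ * θ ^ (d - 1))) ^ (1 / p)
      ≤ (∫ y, g y ∂ sphereMeasure d) ^ (1 / p) :=
    Real.rpow_le_rpow (by positivity) hLB (by positivity)
  refine le_trans (le_of_eq ?_) hDp
  have hn : ((d - 1 : ℕ) : ℝ) = (d : ℝ) - 1 := by
    have h1 : 1 ≤ d := by omega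
    push_cast [Nat.cast_sub h1]
    ring
  rw [Real.mul_rpow (Real.rpow_nonneg (by positivity) p) (by positivity)]
  rw [← Real.rpow_natCast θ (d - 1)]
  rw [Real.mul_rpow hc₁.le (Real.rpow_nonneg hθ0.le _)]
  rw [← Real.rpow_mul (by positivity : (0:ℝ) ≤ c₂ * θ ^ 2), mul_one_div_cancel hp0.ne',
    Real.rpow_one]
  rw [← Real.rpow_mul hθ0.le, hn]
  rw [Real.rpow_add hθ0, mul_one_div]
  rw [show (2:ℝ) = ((2:ℕ):ℝ) by norm_num, Real.rpow_natCast]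
  ring
end
end
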